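/- Let G be a connected embedded simple graph with a cut-set V_c, and suppose C_1 and C_2 are two distinct components of G - V_c such that F_{C_1} and F_{C_2} are both nonempty, where F_C is the set of faces whose boundary vertices lie entirely in C ∪ V_c and which are not boundary faces. Then F_{b,C_1}, the set of boundary faces containing at least one vertex of C_1, is a vertex cut-set of the dual graph G*. -/

import Mathlib

/-- A connected oriented combinatorial embedding of a (multi)graph, given by a
finite set of darts (directed edges), a rotation permutation `σ` (next dart in
the cyclic order around the tail vertex) and a fixed-point-free involution `α`
(dart reversal). -/
structure EmbGraph where
  D : Type
  finD : Finite D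
  σ : Equiv.Perm D
  α : Equiv.Perm D
  α_invol : ∀ d, α (α d) = d
  α_ne : ∀ d, α d ≠ d

namespace EmbGraph

variable (G : EmbGraph)

instance : Finite G.D := G.finD

/-- The setoid identifying darts in a common cycle of a permutation. -/
def sameCycleSetoid (f : Equiv.Perm G.D) : Setoid G.D :=
  ⟨f.SameCycle, ⟨fun _ => Equiv.Perm.SameCycle.refl f _, fun h => h.symm, fun h h' => h.trans h'⟩⟩

/-- The face permutation: the successor of the directed edge `(u,v)` in its
facial walk is the next edge after `(v,u)` in the rotation around `v`. -/
def facePerm : Equiv.Perm G.D := G.σ * G.α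

/-- Vertices are the orbits of `σ`. -/
def Vert := Quotient (G.sameCycleSetoid G.σ)
/-- Edges are the orbits of `α`. -/
def Edge := Quotient (G.sameCycleSetoid G.α)
/-- Faces are the orbits of the face permutation. -/
def Face := Quotient (G.sameCycleSetoid G.facePerm)

/-- The tail vertex of a dart. -/
def vtx (d : G.D) : G.Vert := Quotient.mk (G.sameCycleSetoid G.σ) d
def edgeOf (d : G.D) : G.Edge := Quotient.mk (G.sameCycleSetoid G.α) d
def faceOf (d : G.D) : G.Face := Quotient.mk (G.sameCycleSetoid G.facePerm) d

instance : Finite G.Vert := Quotient.finite _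
instance : Finite G.Edge := Quotient.finite _
instance : Finite G.Face := Quotient.finite _

noncomputable def numVertices : ℕ := Nat.card G.Vert
noncomputable def numEdges : ℕ := Nat.card G.Edge
noncomputable def numFaces : ℕ := Nat.card G.Face

/-- The Euler characteristic `v - e + f`; the genus `g` of the embedding is
defined by `v - e + f = 2 - 2g`. -/
noncomputable def eulerChar : ℤ := (G.numVertices : ℤ) - (G.numEdges : ℤ) + (G.numFaces : ℤ)

/-- The embedded graph is connected. -/
def Connected : Prop :=
  ∀ a b : G.D, Relation.EqvGen (fun x y => y = G.σ x ∨ y = G.α x) a b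

/-- The degree of a vertex: the number of darts with this tail. -/
noncomputable def degree (v : G.Vert) : ℕ := Nat.card {d : G.D // G.vtx d = v}

/-- The size of a face: the number of darts in its facial walk. -/
noncomputable def faceSize (f : G.Face) : ℕ := Nat.card {d : G.D // G.faceOf d = f}

/-- The underlying simple graph of the embedded graph. -/
def underlying : SimpleGraph G.Vert where
  Adj u v := u ≠ v ∧ ∃ d, G.vtx d = u ∧ G.vtx (G.α d) = v
  symm := ⟨by
    rintro u v ⟨huv, d, hd1, hd2⟩
    exact ⟨huv.symm, G.α d, hd2, by rw [G.α_invol]; exact hd1⟩⟩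
  loopless := ⟨fun v h => h.1 rfl⟩

/-- The embedded graph is a simple graph: no loops and no multiple edges. -/
def IsSimple : Prop :=
  (∀ d, G.vtx d ≠ G.vtx (G.α d)) ∧
    ∀ d d', G.vtx d = G.vtx d' → G.vtx (G.α d) = G.vtx (G.α d') → G.edgeOf d = G.edgeOf d'

/-- The dual graph: vertices are the faces of `G`, two faces being adjacent
if they share an edge. -/
def dualGraph : SimpleGraph G.Face where
  Adj f f' := f ≠ f' ∧ ∃ d, G.faceOf d = f ∧ G.faceOf (G.α d) = f'
  symm := ⟨by
    rintro f f' ⟨hff, d, hd1, hd2⟩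
    exact ⟨hff.symm, G.α d, hd2, by rw [G.α_invol]; exact hd1⟩⟩
  loopless := ⟨fun f h => h.1 rfl⟩

/-- The dual (multi)graph is simple: no face shares an edge with itself, and no
two faces share more than one edge. -/
def DualSimple : Prop :=
  (∀ d, G.faceOf d ≠ G.faceOf (G.α d)) ∧
    ∀ d d', G.faceOf d = G.faceOf d' → G.faceOf (G.α d) = G.faceOf (G.α d') →
      G.edgeOf d = G.edgeOf d'

/-- The dual embedded graph. -/
def dualMap : EmbGraph :=
  ⟨G.D, G.finD, G.σ * G.α, G.α, G.α_invol, G.α_ne⟩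

/-- Identifying the angle following dart `a` with the angle following dart `b`:
the rotation is composed with the transposition of `a` and `b`. -/
noncomputable def identifyAngles (a b : G.D) : EmbGraph :=
  letI : DecidableEq G.D := Classical.decEq _
  ⟨G.D, G.finD, G.σ * Equiv.swap a b, G.α, G.α_invol, G.α_ne⟩

/-- The H-operation applied to the edge given by the dart `d = (x,y)`, where
`x` and `y` have degree `3`.  With rotations `y,w',v` around `x` and `x,w,v'`
around `y`, it identifies the angle of `v` preceding `x` with the angle of `v'`
preceding `y`, and the angle of `w` following `y` with the angle of `w'`
following `x`, merging `v` with `v'` and `w` with `w'`. -/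
noncomputable def Hop (d : G.D) : EmbGraph :=
  (G.identifyAngles (G.σ⁻¹ (G.α (G.σ (G.σ d)))) (G.σ⁻¹ (G.α (G.σ (G.σ (G.α d)))))).identifyAngles
    (G.α (G.σ (G.α d))) (G.α (G.σ d))

end EmbGraph

/-- `S` is a vertex cut-set of `H`: deleting `S` leaves two vertices with no
path between them. -/
def IsCutSet {W : Type*} (H : SimpleGraph W) (S : Set W) : Prop :=
  ∃ a b : ↥(Sᶜ), ¬ (H.induce Sᶜ).Reachable a b

/-- `H` is `n`-connected: it has more than `n` vertices and no cut-set with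
fewer than `n` vertices. -/
def KConnected {W : Type*} (n : ℕ) (H : SimpleGraph W) : Prop :=
  n < Nat.card W ∧ ∀ S : Set W, S.ncard < n → ¬ IsCutSet H S

/-- The set of genera `s` for which a simple `c`-connected embedded graph of
genus `s` with a simple dual having a vertex cut of size `k` exists. -/
def deltaSet (k c : ℕ) : Set ℕ :=
  {s | ∃ G : EmbGraph, G.Connected ∧ G.IsSimple ∧ KConnected c G.underlying ∧
      G.eulerChar = 2 - 2 * (s : ℤ) ∧ G.DualSimple ∧
      ∃ S : Set G.Face, S.ncard = k ∧ IsCutSet G.dualGraph S}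

/-- `δ_k(c)`: the minimum genus of a simple `c`-connected embedded graph whose
simple dual has a vertex cut of size `k`. -/
noncomputable def delta (k c : ℕ) : ℕ := sInf (deltaSet k c)


/-- The vertex set of a connected component of `G - V_c`. -/
def compOf (G : EmbGraph) (Vc : Set G.Vert)
    (K : (G.underlying.induce Vcᶜ).ConnectedComponent) : Set G.Vert :=
  {v | ∃ h : v ∈ Vcᶜ, (G.underlying.induce Vcᶜ).connectedComponentMk ⟨v, h⟩ = K}

/-- A boundary face: its facial walk contains at least two (possibly equal)
occurrences of vertices of `Vc`. -/
def IsBoundaryFace (G : EmbGraph) (Vc : Set G.Vert) (f : G.Face) : Prop :=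
  2 ≤ Nat.card {d : G.D // G.faceOf d = f ∧ G.vtx d ∈ Vc}

/-- `F_{b,C}`: the boundary faces containing at least one vertex of `C`. -/
def FbC (G : EmbGraph) (Vc : Set G.Vert) (C : Set G.Vert) : Set G.Face :=
  {f | IsBoundaryFace G Vc f ∧ ∃ d : G.D, G.faceOf d = f ∧ G.vtx d ∈ C}

/-- `F_C`: the non-boundary faces all of whose vertices lie in `C ∪ Vc`. -/
def FC (G : EmbGraph) (Vc : Set G.Vert) (C : Set G.Vert) : Set G.Face :=
  {f | ¬ IsBoundaryFace G Vc f ∧ ∀ d : G.D, G.faceOf d = f → G.vtx d ∈ C ∪ Vc}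

/-! Call a face *attached* to a component `C` of `G - V_c` if its facial walk meets `C` and stays
in `C ∪ V_c`. Faces of `F_{C₁}` are attached to `C₁`, faces of `F_{C₂}` are not, and attachment
to `C₁` survives every step of a dual path avoiding `F_{b,C₁}`. Indeed, the face entered is not a
boundary face (else both ends of the shared edge lie in `V_c`, making the face left a boundary
face meeting `C₁`), it sees an end of the shared edge in `C₁`, and along a non-boundary facial
walk, which visits `V_c` at most once, the remaining vertices form a walk in `G - V_c`. -/

namespace Equiv.Perm

variable {α : Type*} {f : Perm α} {P S : Set α}

theorem mem_iff_mem_of_pow_apply_eq (hstep : ∀ x ∈ P, f x ∈ P → (x ∈ S ↔ f x ∈ S)) {t : α}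
    (hbad : ∀ w, f.SameCycle t w → w ∉ P → f t = w) :
    ∀ (n : ℕ) (x : α), (f ^ n) x = t → x ∈ P → (x ∈ S ↔ t ∈ S) := by
  intro n
  induction n with
  | zero => rintro x rfl -; rfl
  | succ n ih =>
    intro x hxt hx
    rw [pow_succ, mul_apply] at hxt
    by_cases hfx : f x ∈ P
    · exact (hstep x hx hfx).trans (ih (f x) hxt hfx)
    · have hft : f t = f x := hbad (f x) (sameCycle_pow_left.mp (by rw [hxt])).symm hfx
      rw [f.injective hft]

theorem SameCycle.mem_iff_mem_of_subsingleton [Finite α]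
    (hstep : ∀ x ∈ P, f x ∈ P → (x ∈ S ↔ f x ∈ S)) {a b : α}
    (hbad : {x | f.SameCycle a x ∧ x ∉ P}.Subsingleton) (hab : f.SameCycle a b)
    (ha : a ∈ P) (hb : b ∈ P) : a ∈ S ↔ b ∈ S := by
  by_cases hz : ∃ z, f.SameCycle a z ∧ z ∉ P
  · obtain ⟨z, haz, hz⟩ := hz
    -- walking forward, every point of `P` on the cycle reaches `f⁻¹ z` before leaving `P`
    have hat : f.SameCycle a (f.symm z) := sameCycle_symm_apply_right.mpr haz
    have ht : ∀ w, f.SameCycle (f.symm z) w → w ∉ P → f (f.symm z) = w := fun w htw hw => by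
      rw [apply_symm_apply]; exact hbad ⟨haz, hz⟩ ⟨hat.trans htw, hw⟩
    obtain ⟨m, hm⟩ := hat.exists_nat_pow_eq
    obtain ⟨n, hn⟩ := (hab.symm.trans hat).exists_nat_pow_eq
    exact (mem_iff_mem_of_pow_apply_eq hstep ht m a hm ha).trans
      (mem_iff_mem_of_pow_apply_eq hstep ht n b hn hb).symm
  · obtain ⟨n, hn⟩ := hab.exists_nat_pow_eq
    exact mem_iff_mem_of_pow_apply_eq hstep (fun w hbw hw => absurd ⟨w, hab.trans hbw, hw⟩ hz)
      n a hn ha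

end Equiv.Perm

namespace EmbGraph

variable {G : EmbGraph}

theorem vtx_σ (d : G.D) : G.vtx (G.σ d) = G.vtx d :=
  Quotient.sound (Equiv.Perm.sameCycle_apply_left.mpr (Equiv.Perm.SameCycle.refl _ _))

theorem faceOf_eq_faceOf_iff {a b : G.D} : G.faceOf a = G.faceOf b ↔ G.facePerm.SameCycle a b :=
  ⟨Quotient.exact, fun h => Quotient.sound h⟩

theorem faceOf_surjective : Function.Surjective G.faceOf :=
  Quotient.mk_surjective

theorem faceOf_facePerm (d : G.D) : G.faceOf (G.facePerm d) = G.faceOf d :=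
  faceOf_eq_faceOf_iff.mpr (Equiv.Perm.sameCycle_apply_left.mpr (Equiv.Perm.SameCycle.refl _ _))

theorem vtx_facePerm (d : G.D) : G.vtx (G.facePerm d) = G.vtx (G.α d) :=
  vtx_σ (G.α d)

theorem faceOf_σ (d : G.D) : G.faceOf (G.σ d) = G.faceOf (G.α d) := by
  simpa only [facePerm, Equiv.Perm.mul_apply, G.α_invol] using faceOf_facePerm (G.α d)

theorem facePerm_ne (hsimple : G.IsSimple) (d : G.D) : G.facePerm d ≠ d := fun h =>
  hsimple.1 d (by rw [← vtx_facePerm, h])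

theorem σ_ne_α (hsimple : G.IsSimple) (d : G.D) : G.σ d ≠ G.α d := fun h =>
  hsimple.1 d (by rw [← vtx_σ, h])

end EmbGraph

open EmbGraph

section Faces

variable {G : EmbGraph} {Vc : Set G.Vert}

theorem isBoundaryFace_of_ne {f : G.Face} {x y : G.D} (hxy : x ≠ y)
    (hx : G.faceOf x = f) (hy : G.faceOf y = f) (hvx : G.vtx x ∈ Vc) (hvy : G.vtx y ∈ Vc) :
    IsBoundaryFace G Vc f :=
  Finite.one_lt_card_iff_nontrivial.mpr ⟨⟨x, hx, hvx⟩, ⟨y, hy, hvy⟩, by simpa using hxy⟩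

theorem exists_vtx_notMem_of_not_isBoundaryFace (hsimple : G.IsSimple) {f : G.Face}
    (hf : ¬ IsBoundaryFace G Vc f) : ∃ d, G.faceOf d = f ∧ G.vtx d ∉ Vc := by
  obtain ⟨d, rfl⟩ := faceOf_surjective f
  by_contra! h
  exact hf (isBoundaryFace_of_ne (facePerm_ne hsimple d).symm rfl (faceOf_facePerm d)
    (h d rfl) (h _ (faceOf_facePerm d)))

theorem notMem_of_mem_compOf {K : (G.underlying.induce Vcᶜ).ConnectedComponent} {v : G.Vert}
    (hv : v ∈ compOf G Vc K) : v ∉ Vc :=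
  hv.1

theorem compOf_disjoint {K₁ K₂ : (G.underlying.induce Vcᶜ).ConnectedComponent} (hK : K₁ ≠ K₂) :
    Disjoint (compOf G Vc K₁) (compOf G Vc K₂) :=
  Set.disjoint_left.mpr fun _ ⟨_, h₁⟩ ⟨_, h₂⟩ => hK (h₁.symm.trans h₂)

theorem mem_compOf_iff_of_adj {K : (G.underlying.induce Vcᶜ).ConnectedComponent} {u w : G.Vert}
    (hu : u ∉ Vc) (hw : w ∉ Vc) (huw : G.underlying.Adj u w) :
    u ∈ compOf G Vc K ↔ w ∈ compOf G Vc K := by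
  have hmk : (G.underlying.induce Vcᶜ).connectedComponentMk ⟨u, hu⟩ =
      (G.underlying.induce Vcᶜ).connectedComponentMk ⟨w, hw⟩ :=
    SimpleGraph.ConnectedComponent.sound (SimpleGraph.Adj.reachable huw)
  exact ⟨fun ⟨_, h⟩ => ⟨hw, hmk ▸ h⟩, fun ⟨_, h⟩ => ⟨hu, hmk ▸ h⟩⟩

theorem mem_compOf_iff_of_not_isBoundaryFace (hsimple : G.IsSimple)
    {K : (G.underlying.induce Vcᶜ).ConnectedComponent} {a b : G.D}
    (hf : ¬ IsBoundaryFace G Vc (G.faceOf a)) (hab : G.faceOf a = G.faceOf b)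
    (ha : G.vtx a ∉ Vc) (hb : G.vtx b ∉ Vc) :
    G.vtx a ∈ compOf G Vc K ↔ G.vtx b ∈ compOf G Vc K := by
  refine Equiv.Perm.SameCycle.mem_iff_mem_of_subsingleton (P := {d | G.vtx d ∉ Vc})
    (S := {d | G.vtx d ∈ compOf G Vc K}) (fun x hx hfx => ?_) (fun x hx y hy => ?_)
    (faceOf_eq_faceOf_iff.mp hab) ha hb
  · change G.vtx (G.facePerm x) ∉ Vc at hfx
    change G.vtx x ∈ compOf G Vc K ↔ G.vtx (G.facePerm x) ∈ compOf G Vc K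
    rw [vtx_facePerm] at hfx ⊢
    exact mem_compOf_iff_of_adj hx hfx ⟨hsimple.1 x, x, rfl, rfl⟩
  · by_contra hxy
    exact hf (isBoundaryFace_of_ne hxy (faceOf_eq_faceOf_iff.mpr hx.1).symm
      (faceOf_eq_faceOf_iff.mpr hy.1).symm (not_not.mp hx.2) (not_not.mp hy.2))

end Faces

def AttachedTo (G : EmbGraph) (Vc : Set G.Vert) (C : Set G.Vert) (f : G.Face) : Prop :=
  (∀ d : G.D, G.faceOf d = f → G.vtx d ∈ C ∪ Vc) ∧ ∃ d : G.D, G.faceOf d = f ∧ G.vtx d ∈ C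

section Attached

variable {G : EmbGraph} {Vc : Set G.Vert}

theorem attachedTo_of_mem_FC (hsimple : G.IsSimple) {C : Set G.Vert} {f : G.Face}
    (hf : f ∈ FC G Vc C) : AttachedTo G Vc C f := by
  obtain ⟨d, hd, hdVc⟩ := exists_vtx_notMem_of_not_isBoundaryFace hsimple hf.1
  exact ⟨hf.2, d, hd, (hf.2 d hd).resolve_right hdVc⟩

theorem not_attachedTo_of_mem_FC (hsimple : G.IsSimple)
    {K₁ K₂ : (G.underlying.induce Vcᶜ).ConnectedComponent} (hK : K₁ ≠ K₂) {f : G.Face}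
    (hf : f ∈ FC G Vc (compOf G Vc K₂)) : ¬ AttachedTo G Vc (compOf G Vc K₁) f := by
  rintro ⟨hall, -⟩
  obtain ⟨d, hd, hdVc⟩ := exists_vtx_notMem_of_not_isBoundaryFace hsimple hf.1
  exact Set.disjoint_left.mp (compOf_disjoint hK) ((hall d hd).resolve_right hdVc)
    ((hf.2 d hd).resolve_right hdVc)

theorem AttachedTo.of_dualGraph_adj (hsimple : G.IsSimple)
    {K : (G.underlying.induce Vcᶜ).ConnectedComponent} {f f' : G.Face}
    (hA : AttachedTo G Vc (compOf G Vc K) f) (hf : f ∉ FbC G Vc (compOf G Vc K))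
    (hf' : f' ∉ FbC G Vc (compOf G Vc K)) (hadj : G.dualGraph.Adj f f') :
    AttachedTo G Vc (compOf G Vc K) f' := by
  obtain ⟨-, d, rfl, rfl⟩ := hadj
  obtain ⟨hall, hmeet⟩ := hA
  -- the face across `d` contains `α d` and `σ d`, whose tails are the two ends of `d`
  have hu : G.vtx d ∈ compOf G Vc K ∪ Vc := hall d rfl
  have hw : G.vtx (G.α d) ∈ compOf G Vc K ∪ Vc := by
    simpa only [vtx_facePerm] using hall _ (faceOf_facePerm d)
  have hnb : ¬ IsBoundaryFace G Vc (G.faceOf (G.α d)) := fun hb => by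
    have huVc := hu.resolve_left fun huC => hf' ⟨hb, G.σ d, faceOf_σ d, by rwa [vtx_σ]⟩
    have hwVc := hw.resolve_left fun hwC => hf' ⟨hb, G.α d, rfl, hwC⟩
    exact hf ⟨isBoundaryFace_of_ne (facePerm_ne hsimple d).symm rfl (faceOf_facePerm d) huVc
      (by rwa [vtx_facePerm]), hmeet⟩
  obtain ⟨e, he, heC⟩ : ∃ e, G.faceOf e = G.faceOf (G.α d) ∧ G.vtx e ∈ compOf G Vc K := by
    rcases hu with huC | huVc
    · exact ⟨G.σ d, faceOf_σ d, by rwa [vtx_σ]⟩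
    · exact ⟨G.α d, rfl, hw.resolve_right fun hwVc =>
        hnb (isBoundaryFace_of_ne (σ_ne_α hsimple d) (faceOf_σ d) rfl (by rwa [vtx_σ]) hwVc)⟩
  refine ⟨fun e' he' => ?_, e, he, heC⟩
  by_cases he'Vc : G.vtx e' ∈ Vc
  · exact Or.inr he'Vc
  · exact Or.inl ((mem_compOf_iff_of_not_isBoundaryFace hsimple (he ▸ hnb) (he.trans he'.symm)
      (notMem_of_mem_compOf heC) he'Vc).mp heC)

theorem AttachedTo.of_reachable (hsimple : G.IsSimple)
    {K : (G.underlying.induce Vcᶜ).ConnectedComponent} {a b : ↥(FbC G Vc (compOf G Vc K))ᶜ}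
    (hab : (G.dualGraph.induce (FbC G Vc (compOf G Vc K))ᶜ).Reachable a b)
    (ha : AttachedTo G Vc (compOf G Vc K) a.1) : AttachedTo G Vc (compOf G Vc K) b.1 := by
  rw [SimpleGraph.reachable_iff_reflTransGen] at hab
  induction hab with
  | refl => exact ha
  | @tail c d _ hadj ih => exact ih.of_dualGraph_adj hsimple c.2 d.2 hadj

theorem boundary_faces_cut_dual_general
    (G : EmbGraph) (hsimple : G.IsSimple)
    (Vc : Set G.Vert)
    (K1 K2 : (G.underlying.induce Vcᶜ).ConnectedComponent) (hK : K1 ≠ K2)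
    (h1 : (FC G Vc (compOf G Vc K1)).Nonempty)
    (h2 : (FC G Vc (compOf G Vc K2)).Nonempty) :
    IsCutSet G.dualGraph (FbC G Vc (compOf G Vc K1)) := by
  obtain ⟨f1, hf1⟩ := h1
  obtain ⟨f2, hf2⟩ := h2
  refine ⟨⟨f1, fun h => hf1.1 h.1⟩, ⟨f2, fun h => hf2.1 h.1⟩, fun hreach => ?_⟩
  exact not_attachedTo_of_mem_FC hsimple hK hf2
    (AttachedTo.of_reachable hsimple hreach (attachedTo_of_mem_FC hsimple hf1))

/-- if `C₁, C₂` are distinct components of `G - V_c` with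
`F_{C₁}` and `F_{C₂}` nonempty, then `F_{b,C₁}` is a vertex cut-set of the dual. -/
theorem boundary_faces_cut_dual
    (G : EmbGraph) (hconn : G.Connected) (hsimple : G.IsSimple)
    (Vc : Set G.Vert) (hcut : IsCutSet G.underlying Vc)
    (K1 K2 : (G.underlying.induce Vcᶜ).ConnectedComponent) (hK : K1 ≠ K2)
    (h1 : (FC G Vc (compOf G Vc K1)).Nonempty)
    (h2 : (FC G Vc (compOf G Vc K2)).Nonempty) :
    IsCutSet G.dualGraph (FbC G Vc (compOf G Vc K1)) :=
  boundary_faces_cut_dual_general G hsimple Vc K1 K2 hK h1 h2
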